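/- Let G be a group that is not locally finite. Then there exist a finite alphabet A, a G-SFT X ⊆ A^G, a G-shift Y ⊆ (Fin 2)^G, and a factor map φ : X → Y (a continuous surjection satisfying φ(σ^g x) = σ^g(φ(x)) for all g ∈ G and x ∈ X), such that Y is not a G-SFT. That is, there exists a sofic G-shift which is not a G-SFT. -/

import Mathlib

/-!
Take a finite symmetric set `T ∌ 1` generating an infinite subgroup. In the SFT `X` whose
nonzero letters are pointers `u ∈ T` from `g` to `u * g` that must be answered by `u⁻¹`, the
support of every configuration is perfectly matched along left `T`-edges, and the factor `Y`
only remembers the support. A finite perfectly matched set has even size, so the indicator of a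
simple `T`-path with an odd number of vertices is not in `Y`. Since the subgroup is infinite,
such a path can be chosen with its ends too far apart to fit in one window `F`; every window
then sees it as an even subpath, which is matchable, so no set of forbidden `F`-patterns
defines `Y`.
-/

open scoped Pointwise symmDiff

namespace LFPaper

variable {G A B : Type*}

/-- The right shift action: `(shift g x) h = x (h * g)`. -/
def shift [Group G] (g : G) (x : G → A) : G → A := fun h => x (h * g)

/-- Restriction of a configuration to a finite shape. -/
def restrictF (F : Finset G) (x : G → A) : F → A := fun a => x a

/-- A `G`-shift space: a closed, shift-invariant subset of the full shift. -/
def IsShiftSpace [Group G] [TopologicalSpace A] (X : Set (G → A)) : Prop :=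
  IsClosed X ∧ ∀ g : G, ∀ x ∈ X, shift g x ∈ X

/-- A `G`-shift of finite type: the set of configurations avoiding a finite
set of forbidden patterns on a finite shape. -/
def IsSFT [Group G] (X : Set (G → A)) : Prop :=
  ∃ (F : Finset G) (P : Set (F → A)),
    X = {x : G → A | ∀ g : G, restrictF F (shift g x) ∉ P}

/-- The `F`-language of `X`: all restrictions of elements of `X` to `F`. -/
def language (X : Set (G → A)) (F : Finset G) : Set (F → A) :=
  {w | ∃ x ∈ X, restrictF F x = w}

/-- Strong irreducibility of a shift. -/
def StronglyIrreducible [Group G] (X : Set (G → A)) : Prop :=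
  ∃ K : Finset G, ∀ (Fu Fv : Finset G) (u : Fu → A) (v : Fv → A),
    Disjoint (Fu : Set G) ((K : Set G) * (Fv : Set G)) →
    u ∈ language X Fu → v ∈ language X Fv →
    ∃ x ∈ X, restrictF Fu x = u ∧ restrictF Fv x = v

/-- The free `G`-extension of an `H`-shift `Y`: all configurations whose
restriction to every right coset of `H` (pulled back to `H`) lies in `Y`. -/
def freeExt [Group G] (H : Subgroup G) (Y : Set (H → A)) : Set (G → A) :=
  {x : G → A | ∀ g : G, (fun h : H => x ((h : G) * g)) ∈ Y}

/-- Local finiteness of a group: every finitely generated subgroup is finite. -/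
def IsLocallyFinite (G : Type*) [Group G] : Prop :=
  ∀ S : Finset G, Finite ↥(Subgroup.closure (S : Set G))

/-- A (left) Følner sequence for a countable group. -/
def IsFolner [Group G] (F : ℕ → Finset G) : Prop :=
  (∀ n, (F n).Nonempty) ∧ (∀ g : G, ∃ n, g ∈ F n) ∧
  ∀ g : G, Filter.Tendsto
    (fun n => (Set.ncard ((((fun h => g * h) '' (F n : Set G))) ∆ ((F n : Set G))) : ℝ) /
      ((F n).card : ℝ))
    Filter.atTop (nhds 0)

/-- Cardinality of the `F`-language. -/
noncomputable def langCard (X : Set (G → A)) (F : Finset G) : ℕ :=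
  (language X F).ncard

/-- A shift-commuting self-homeomorphism of `X` (an automorphism of the shift `X`). -/
def IsAutomorphism [Group G] [TopologicalSpace A] (X : Set (G → A)) (φ : Equiv.Perm X) : Prop :=
  Continuous φ ∧ Continuous φ.symm ∧
  ∀ (g : G) (x y : X), (y : G → A) = shift g (x : G → A) →
    (φ y : G → A) = shift g ((φ x : G → A))

section ShiftSpaces
variable [Group G]

theorem shift_shift (g h : G) (x : G → A) : shift h (shift g x) = shift (h * g) x := by
  funext k
  simp only [shift, mul_assoc]

theorem IsSFT.isShiftSpace [TopologicalSpace A] [DiscreteTopology A] {X : Set (G → A)}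
    (hX : IsSFT X) : IsShiftSpace X := by
  obtain ⟨F, P, rfl⟩ := hX
  refine ⟨?_, fun g x hx h => by simpa only [shift_shift] using hx (h * g)⟩
  simp only [Set.ofPred_forall]
  exact isClosed_iInter fun g => (isClosed_discrete Pᶜ).preimage (f := restrictF F ∘ shift g)
    (continuous_pi fun a => continuous_apply ((a : G) * g))

theorem IsShiftSpace.image [TopologicalSpace A] [CompactSpace A] [TopologicalSpace B]
    [T2Space B] {X : Set (G → A)} (hX : IsShiftSpace X) {φ : (G → A) → (G → B)}
    (hφ : ContinuousOn φ X) (hφshift : ∀ g, ∀ x ∈ X, φ (shift g x) = shift g (φ x)) :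
    IsShiftSpace (φ '' X) := by
  refine ⟨(hX.1.isCompact.image_of_continuousOn hφ).isClosed, ?_⟩
  rintro g _ ⟨x, hx, rfl⟩
  exact ⟨shift g x, hX.2 g x hx, hφshift g x hx⟩

theorem mem_of_forall_window_eq {X : Set (G → A)} {F : Finset G} {P : Set (F → A)}
    (hX : X = {x | ∀ g, restrictF F (shift g x) ∉ P}) {y : G → A}
    (hy : ∀ g, ∃ x ∈ X, ∀ f ∈ F, x (f * g) = y (f * g)) : y ∈ X := by
  rw [hX]
  intro g
  obtain ⟨x, hx, hxy⟩ := hy g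
  rw [hX] at hx
  have hwindow : restrictF F (shift g y) = restrictF F (shift g x) :=
    funext fun f => (hxy f f.2).symm
  exact hwindow ▸ hx g

end ShiftSpaces

theorem even_ncard_of_involution {α : Type*} {S : Set α} (hS : S.Finite)
    (f : α → α) (hmaps : Set.MapsTo f S S) (hinv : ∀ b ∈ S, f (f b) = b)
    (hfree : ∀ b ∈ S, f b ≠ b) : Even S.ncard := by
  classical
  have := hS.fintype
  let σ : Equiv.Perm S := Function.Involutive.toPerm (hmaps.restrict f S S)
    fun b => Subtype.ext (hinv b b.2)
  have hσ : ∀ b, (σ b : α) = f b := fun b => rfl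
  have hsupp : σ.support = Finset.univ := by
    ext b
    simpa [Equiv.Perm.mem_support, Subtype.ext_iff, hσ] using hfree b b.2
  have hσ2 : σ ^ 2 = 1 := by
    ext b
    simp [sq, hσ, hinv b b.2]
  rw [even_iff_two_dvd, ← Nat.card_coe_set_eq, Nat.card_eq_fintype_card, ← Finset.card_univ,
    ← hsupp]
  exact Equiv.Perm.two_dvd_card_support hσ2

theorem image_Iio_add_one_eq_insert_last {α : Type*} (γ : ℕ → α) (n : ℕ) :
    γ '' Set.Iio (n + 1) = insert (γ n) (γ '' Set.Iio n) := by
  rw [Set.Iio_add_one_eq_Iic, ← Set.Iio_insert, Set.image_insert_eq]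

theorem image_Iio_add_one_eq_insert_first {α : Type*} (γ : ℕ → α) (n : ℕ) :
    γ '' Set.Iio (n + 1) = insert (γ 0) ((fun k => γ (k + 1)) '' Set.Iio n) := by
  ext z
  simp only [Set.mem_image, Set.mem_Iio, Set.mem_insert_iff]
  constructor
  · rintro ⟨_ | k, hk, rfl⟩
    exacts [Or.inl rfl, Or.inr ⟨k, by omega, rfl⟩]
  · rintro (rfl | ⟨k, hk, rfl⟩)
    exacts [⟨0, by omega, rfl⟩, ⟨k + 1, by omega, rfl⟩]

def pairMate (k : ℕ) : ℕ := if Even k then k + 1 else k - 1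

theorem pairMate_two_mul (j : ℕ) : pairMate (2 * j) = 2 * j + 1 := by
  simp [pairMate]

theorem pairMate_two_mul_add_one (j : ℕ) : pairMate (2 * j + 1) = 2 * j := by
  simp [pairMate]

theorem pairMate_pairMate (k : ℕ) : pairMate (pairMate k) = k := by
  rcases Nat.even_or_odd' k with ⟨j, rfl | rfl⟩ <;>
    simp [pairMate_two_mul, pairMate_two_mul_add_one]

theorem pairMate_lt {n k : ℕ} (hn : Even n) (hk : k < n) : pairMate k < n := by
  obtain ⟨r, rfl⟩ := hn
  rcases Nat.even_or_odd' k with ⟨j, rfl | rfl⟩ <;>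
    simp only [pairMate_two_mul, pairMate_two_mul_add_one] <;> omega

section LeftPaths
variable [Group G]

/-- `n` counts the vertices `γ 0, …, γ (n - 1)` of the path. -/
def IsLeftPath (T : Finset G) (n : ℕ) (γ : ℕ → G) : Prop :=
  Set.InjOn γ (Set.Iio n) ∧ ∀ k, k + 1 < n → γ (k + 1) * (γ k)⁻¹ ∈ T

namespace IsLeftPath
variable {T : Finset G} {n : ℕ} {γ : ℕ → G}

theorem mono (hγ : IsLeftPath T n γ) {m : ℕ} (hm : m ≤ n) : IsLeftPath T m γ :=
  ⟨hγ.1.mono (Set.Iio_subset_Iio hm), fun k hk => hγ.2 k (by omega)⟩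

theorem tail (hγ : IsLeftPath T (n + 1) γ) : IsLeftPath T n (fun k => γ (k + 1)) := by
  refine ⟨fun i hi j hj hij => ?_, fun k hk => hγ.2 (k + 1) (by omega)⟩
  simp only [Set.mem_Iio] at hi hj
  have := hγ.1 (by simp; omega) (by simp; omega) hij
  omega

theorem pairMate_mul_inv_mem (hT : ∀ t ∈ T, t⁻¹ ∈ T) (hγ : IsLeftPath T n γ) (hn : Even n)
    {k : ℕ} (hk : k < n) : γ (pairMate k) * (γ k)⁻¹ ∈ T := by
  obtain ⟨r, rfl⟩ := hn
  rcases Nat.even_or_odd' k with ⟨j, rfl | rfl⟩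
  · rw [pairMate_two_mul]
    exact hγ.2 _ (by omega)
  · rw [pairMate_two_mul_add_one]
    simpa using hT _ (hγ.2 (2 * j) (by omega))

end IsLeftPath

theorem reachable_mulCayley_one_of_mem_closure {S : Set G} {h : G}
    (hh : h ∈ Subgroup.closure S) : (SimpleGraph.mulCayley S).Reachable 1 h := by
  have step : ∀ x, ∀ y ∈ S, (SimpleGraph.mulCayley S).Reachable x (x * y) := by
    intro x y hy
    by_cases hxy : x = x * y
    · rw [← hxy]
    · exact ((SimpleGraph.mulCayley_adj' S _ _).2 ⟨hxy, y, hy, Or.inl rfl⟩).reachable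
  induction hh using Subgroup.closure_induction_right with
  | one => rfl
  | mul_right x _ y hy ih => exact ih.trans (step x y hy)
  | mul_inv_cancel x _ y hy ih =>
    exact ih.trans (by simpa using (step (x * y⁻¹) y hy).symm)

theorem exists_isLeftPath_of_mem_closure {T : Finset G} (hT : ∀ t ∈ T, t⁻¹ ∈ T) {h : G}
    (hh : h ∈ Subgroup.closure (T : Set G)) :
    ∃ n γ, IsLeftPath T (n + 1) γ ∧ γ 0 = 1 ∧ γ n = h := by
  -- a path from `1` to `h⁻¹` in the right Cayley graph, inverted pointwise
  obtain ⟨p, hp⟩ := (reachable_mulCayley_one_of_mem_closure (inv_mem hh)).exists_isPath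
  refine ⟨p.length, fun k => (p.getVert k)⁻¹, ⟨?_, fun k hk => ?_⟩, by simp, by simp⟩
  · intro i hi j hj hij
    exact hp.getVert_injOn (by simpa [Nat.lt_succ_iff] using hi)
      (by simpa [Nat.lt_succ_iff] using hj) (inv_injective hij)
  · have hadj := (SimpleGraph.mulCayley_adj _ _ _).1 (p.adj_getVert_succ (i := k) (by omega))
    simp only [inv_inv]
    rcases hadj.2 with h' | h'
    · simpa using hT _ h'
    · exact h'

theorem exists_even_isLeftPath_not_mem {T : Finset G} (hT : ∀ t ∈ T, t⁻¹ ∈ T)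
    (hinf : (Subgroup.closure (T : Set G) : Set G).Infinite) (D : Finset G) :
    ∃ n γ, Even n ∧ IsLeftPath T (n + 1) γ ∧ γ 0 = 1 ∧ γ n ∉ D := by
  classical
  -- avoiding `T * D` allows shortening a path of odd length by one step
  obtain ⟨h, hh, hhD⟩ := (hinf.sdiff (D ∪ T * D).finite_toSet).nonempty
  obtain ⟨L, γ, hγ, hγ0, hγL⟩ := exists_isLeftPath_of_mem_closure hT hh
  simp only [Finset.coe_union, Set.mem_union, Finset.mem_coe, not_or] at hhD
  rcases Nat.even_or_odd L with hL | ⟨k, rfl⟩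
  · exact ⟨L, γ, hL, hγ, hγ0, hγL ▸ hhD.1⟩
  · refine ⟨2 * k, γ, even_two_mul k, hγ.mono (by omega), hγ0, fun hk => hhD.2 ?_⟩
    rw [← hγL]
    exact Finset.mem_mul.2 ⟨_, hγ.2 (2 * k) (by omega), _, hk, by group⟩

end LeftPaths

section Pointers
variable (T : Finset G)

-- Letter `0` is blank; letter `i + 1` points to the `i`-th element of `T`.
open Classical in
noncomputable def encodePointer (u : G) : Fin (T.card + 1) :=
  if hu : u ∈ T then (T.equivFin ⟨u, hu⟩).succ else 0

noncomputable def decodePointer (a : Fin (T.card + 1)) : Option G :=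
  Fin.cases none (fun i => some (T.equivFin.symm i : G)) a

variable {T}

theorem decodePointer_encodePointer {u : G} (hu : u ∈ T) :
    decodePointer T (encodePointer T u) = some u := by
  simp [encodePointer, decodePointer, hu]

theorem decodePointer_eq_none_iff {a : Fin (T.card + 1)} : decodePointer T a = none ↔ a = 0 := by
  cases a using Fin.cases <;> simp [decodePointer]

theorem mem_of_decodePointer_eq_some {a : Fin (T.card + 1)} {u : G}
    (h : decodePointer T a = some u) : u ∈ T := by
  cases a using Fin.cases with
  | zero => simp [decodePointer] at h
  | succ i =>
    simp only [decodePointer, Fin.cases_succ, Option.some.injEq] at h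
    exact h ▸ (T.equivFin.symm i).2

end Pointers

section MatchingShift
variable [Group G] (T : Finset G)

-- Pointers act by left multiplication, which commutes with the right shift.
def matchingShift : Set (G → Fin (T.card + 1)) :=
  {x | ∀ g u, decodePointer T (x g) = some u → decodePointer T (x (u * g)) = some u⁻¹}

theorem isSFT_matchingShift : IsSFT (matchingShift T) := by
  classical
  refine ⟨insert 1 T, {w | ∃ u, ∃ hu : u ∈ T,
    decodePointer T (w ⟨1, T.mem_insert_self 1⟩) = some u ∧
      decodePointer T (w ⟨u, Finset.mem_insert_of_mem hu⟩) ≠ some u⁻¹}, ?_⟩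
  ext x
  simp only [matchingShift, restrictF, shift, one_mul, Set.mem_ofPred_eq, not_exists, not_and,
    not_not]
  exact forall_congr' fun g => ⟨fun hx u _ => hx u, fun hx u hu => hx u
    (mem_of_decodePointer_eq_some hu) hu⟩

variable {T}

theorem even_ncard_support_of_mem_matchingShift (h1 : (1 : G) ∉ T)
    {x : G → Fin (T.card + 1)} (hx : x ∈ matchingShift T) (hfin : (Function.support x).Finite) :
    Even (Function.support x).ncard := by
  have hptr : ∀ b ∈ Function.support x, ∃ u, decodePointer T (x b) = some u := fun b hb =>
    Option.ne_none_iff_exists'.1 (mt decodePointer_eq_none_iff.1 hb)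
  refine even_ncard_of_involution hfin (fun b => (decodePointer T (x b)).getD 1 * b) ?_ ?_ ?_
  · intro b hb
    obtain ⟨u, hu⟩ := hptr b hb
    simp only [hu, Option.getD_some, Function.mem_support, ← decodePointer_eq_none_iff.not,
      hx b u hu, reduceCtorEq, not_false_eq_true]
  · intro b hb
    obtain ⟨u, hu⟩ := hptr b hb
    simp [hu, hx b u hu]
  · intro b hb
    obtain ⟨u, hu⟩ := hptr b hb
    simp only [hu, Option.getD_some, ne_eq, mul_eq_right]
    rintro rfl
    exact h1 (mem_of_decodePointer_eq_some hu)

theorem exists_mem_matchingShift_support_eq (hT : ∀ t ∈ T, t⁻¹ ∈ T) {n : ℕ} (hn : Even n)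
    {γ : ℕ → G} (hγ : IsLeftPath T n γ) :
    ∃ x ∈ matchingShift T, Function.support x = γ '' Set.Iio n := by
  classical
  let x : G → Fin (T.card + 1) := (γ '' Set.Iio n).indicator fun g =>
    encodePointer T (γ (pairMate (Function.invFunOn γ (Set.Iio n) g)) * g⁻¹)
  have hxγ : ∀ k < n, x (γ k) = encodePointer T (γ (pairMate k) * (γ k)⁻¹) := fun k hk => by
    simp only [x]
    rw [Set.indicator_of_mem (Set.mem_image_of_mem γ (Set.mem_Iio.2 hk)),
      hγ.1.leftInvOn_invFunOn hk]
  have hxγ_ne : ∀ k < n, x (γ k) ≠ 0 := fun k hk h0 => by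
    have := decodePointer_encodePointer (hγ.pairMate_mul_inv_mem hT hn hk)
    rw [← hxγ k hk, h0, decodePointer_eq_none_iff.2 rfl] at this
    cases this
  have hx0 : ∀ g ∉ γ '' Set.Iio n, x g = 0 := fun g hg => Set.indicator_of_notMem hg _
  refine ⟨x, fun g u hu => ?_, Set.ext fun g => ?_⟩
  · by_cases hg : g ∈ γ '' Set.Iio n
    · obtain ⟨k, hk, rfl⟩ := hg
      have hmT := hγ.pairMate_mul_inv_mem hT hn hk
      rw [hxγ k hk, decodePointer_encodePointer hmT, Option.some.injEq] at hu
      subst hu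
      have hback : γ (pairMate (pairMate k)) * (γ (pairMate k))⁻¹ =
          (γ (pairMate k) * (γ k)⁻¹)⁻¹ := by
        rw [pairMate_pairMate]
        group
      rw [inv_mul_cancel_right, hxγ _ (pairMate_lt hn hk), hback,
        decodePointer_encodePointer (hT _ hmT)]
    · rw [hx0 g hg, decodePointer_eq_none_iff.2 rfl] at hu
      cases hu
  · by_cases hg : g ∈ γ '' Set.Iio n
    · obtain ⟨k, hk, rfl⟩ := hg
      exact iff_of_true (hxγ_ne k hk) (Set.mem_image_of_mem γ hk)
    · exact iff_of_false (not_not.2 (hx0 g hg)) hg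

end MatchingShift

section Occupancy
variable [Zero A]

noncomputable def occupancy (x : G → A) : G → Fin 2 := Set.indicator {0}ᶜ 1 ∘ x

theorem occupancy_eq_indicator (x : G → A) :
    occupancy x = (Function.support x).indicator 1 := by
  classical
  funext g
  simp [occupancy, Set.indicator_apply]

theorem continuous_occupancy [TopologicalSpace A] [DiscreteTopology A] :
    Continuous (occupancy : (G → A) → G → Fin 2) :=
  continuous_pi fun g => continuous_of_discreteTopology.comp (continuous_apply g)

theorem occupancy_shift [Group G] (g : G) (x : G → A) :
    occupancy (shift g x) = shift g (occupancy x) :=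
  rfl

theorem indicator_mem_image_occupancy_iff {X : Set (G → A)} {S : Set G} :
    S.indicator 1 ∈ occupancy '' X ↔ ∃ x ∈ X, Function.support x = S := by
  classical
  simp only [Set.mem_image, occupancy_eq_indicator]
  exact exists_congr fun x => and_congr_right fun _ =>
    ⟨fun h => Set.ext fun g => by
      have hg := congrFun h g
      by_cases g ∈ S <;> simp_all [Set.indicator_apply],
      fun h => h ▸ rfl⟩

end Occupancy

section NotSFT
variable [Group G] {T : Finset G} {n : ℕ} {γ : ℕ → G}

theorem indicator_mem_image_occupancy_of_even (hT : ∀ t ∈ T, t⁻¹ ∈ T) (hn : Even n)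
    (hγ : IsLeftPath T n γ) : (γ '' Set.Iio n).indicator 1 ∈ occupancy '' matchingShift T :=
  indicator_mem_image_occupancy_iff.2 (exists_mem_matchingShift_support_eq hT hn hγ)

theorem indicator_notMem_image_occupancy_of_odd (h1 : (1 : G) ∉ T) (hn : Odd n)
    (hγ : IsLeftPath T n γ) : (γ '' Set.Iio n).indicator 1 ∉ occupancy '' matchingShift T := by
  rw [indicator_mem_image_occupancy_iff]
  rintro ⟨x, hx, hsupp⟩
  have := even_ncard_support_of_mem_matchingShift h1 hx (hsupp ▸ (Set.finite_Iio _).image γ)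
  rw [hsupp, hγ.1.ncard_image, Set.ncard_Iio_nat] at this
  exact Nat.not_even_iff_odd.2 hn this

theorem not_isSFT_image_occupancy_matchingShift (h1 : (1 : G) ∉ T) (hT : ∀ t ∈ T, t⁻¹ ∈ T)
    (hinf : (Subgroup.closure (T : Set G) : Set G).Infinite) :
    ¬ IsSFT (occupancy '' matchingShift T) := by
  classical
  rintro ⟨F, P, hY⟩
  obtain ⟨n, γ, hn, hγ, hγ0, hγn⟩ := exists_even_isLeftPath_not_mem hT hinf (F * F⁻¹)
  refine indicator_notMem_image_occupancy_of_odd h1 hn.add_one hγ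
    (mem_of_forall_window_eq hY fun g => ?_)
  have hwindow : (∀ f ∈ F, f * g ≠ γ n) ∨ ∀ f ∈ F, f * g ≠ γ 0 := by
    by_contra! ⟨⟨f, hf, hfn⟩, ⟨f', hf', hf'0⟩⟩
    refine hγn (Finset.mem_mul.2 ⟨f, hf, f'⁻¹, Finset.inv_mem_inv hf', ?_⟩)
    rw [← hfn, eq_inv_of_mul_eq_one_right (hf'0.trans hγ0)]
  rcases hwindow with hwindow | hwindow
  · refine ⟨_, indicator_mem_image_occupancy_of_even hT hn (hγ.mono n.le_succ), fun f hf => ?_⟩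
    simp [image_Iio_add_one_eq_insert_last, Set.indicator_apply, hwindow f hf]
  · refine ⟨_, indicator_mem_image_occupancy_of_even hT hn hγ.tail, fun f hf => ?_⟩
    simp [image_Iio_add_one_eq_insert_first, Set.indicator_apply, hwindow f hf]

end NotSFT

theorem exists_finset_closure_infinite_of_not_isLocallyFinite [Group G]
    (hLF : ¬ IsLocallyFinite G) :
    ∃ T : Finset G, (1 : G) ∉ T ∧ (∀ t ∈ T, t⁻¹ ∈ T) ∧
      (Subgroup.closure (T : Set G) : Set G).Infinite := by
  classical
  simp only [IsLocallyFinite, not_forall, not_finite_iff_infinite] at hLF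
  obtain ⟨S, hS⟩ := hLF
  refine ⟨(S ∪ S⁻¹).erase 1, Finset.notMem_erase 1 _, fun t ht => ?_, ?_⟩
  · simp only [Finset.mem_erase, Finset.mem_union, Finset.mem_inv', inv_inv] at ht ⊢
    exact ⟨inv_ne_one.2 ht.1, ht.2.symm⟩
  · rw [Finset.coe_erase, Subgroup.closure_sdiff_one, Finset.coe_union, Finset.coe_inv,
      Subgroup.closure_union, Subgroup.closure_inv, sup_idem]
    exact Set.infinite_coe_iff.1 hS

/-- Over a group that is not locally finite, there exists a sofic `G`-shift
(a factor of a `G`-SFT) which is not a `G`-SFT. -/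
theorem exists_sofic_not_SFT [Group G] (hLF : ¬ IsLocallyFinite G) :
    ∃ (m : ℕ) (X : Set (G → Fin (m + 1))) (Y : Set (G → Fin 2))
      (phi : (G → Fin (m + 1)) → (G → Fin 2)),
      IsSFT X ∧ IsShiftSpace Y ∧ ContinuousOn phi X ∧ phi '' X = Y ∧
      (∀ g : G, ∀ x ∈ X, phi (shift g x) = shift g (phi x)) ∧
      ¬ IsSFT Y := by
  obtain ⟨T, h1, hT, hinf⟩ := exists_finset_closure_infinite_of_not_isLocallyFinite hLF
  have hX := isSFT_matchingShift T
  have hφ := (continuous_occupancy (G := G)).continuousOn (s := matchingShift T)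
  exact ⟨T.card, matchingShift T, occupancy '' matchingShift T, occupancy, hX,
    hX.isShiftSpace.image hφ fun g x _ => occupancy_shift g x, hφ, rfl,
    fun g x _ => occupancy_shift g x, not_isSFT_image_occupancy_matchingShift h1 hT hinf⟩

end LFPaper
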